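/- Let β > 0 and 0 < γ < β². Set c_n = e^{γn}, a_n = n^{1/2} e^{nγ²/(2β²)}, and α = γ/β². Then limsup_{n→∞} (a_n/c_n) · ∫_0^∞ x e^{-x} (1/√(2π)) ∫_{-∞}^∞ e^{-z²/2} 1\{x e^{β√n z} ≤ ε c_n\} e^{β√n z} dz dx ≤ (1/(β - γ/β)) · ε^{1-α} · ∫_0^∞ x^α e^{-x} dx, for every ε ∈ (0,1]. -/

import Mathlib

/-! Completing the square,
`∫ 1{z ≤ t} e^{-z²/2} e^{σz} dz = e^{σ²/2} ∫_{-∞}^{t-σ} e^{-w²/2} dw`.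
With `σ = β√n`, `m = (β - γ/β)√n` and `ℓ = log (x/ε)`, the prefactor `a_n e^{σ²/2} / c_n` is
`√n e^{m²/2}` and the upper limit is `-(m + ℓ/σ)`. Where `ℓ ≥ -mσ/2` this limit is `≤ -m/2`, so
the Mills-ratio bound `∫_{-∞}^{-u} e^{-w²/2} dw ≤ u⁻¹ e^{-u²/2}` bounds the integrand by
`(2/√(2π)) (β - γ/β)⁻¹ ε^{1-α} x^α e^{-x}`, uniformly in `n`. On the remaining range
`x < ε e^{-mσ/2}` the integrand is at most `ε √n e^{-γ(β - γ/β)n/(2β)} e^{-x}`, which vanishes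
in the limit. -/

open MeasureTheory Real Set Filter

lemma integrable_exp_neg_sq_div_two : Integrable fun z : ℝ => exp (-z ^ 2 / 2) := by
  simpa only [neg_mul, one_div, ← div_eq_inv_mul, neg_div] using
    integrable_exp_neg_mul_sq (one_half_pos (α := ℝ))

lemma setIntegral_exp_neg_sq_div_two_le (s : Set ℝ) :
    ∫ z in s, exp (-z ^ 2 / 2) ≤ √(2 * π) := by
  have total : ∫ z, exp (-z ^ 2 / 2) = √(2 * π) := by
    simpa only [neg_mul, one_div, ← div_eq_inv_mul, neg_div, div_inv_eq_mul, mul_comm π]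
      using integral_gaussian (1 / 2)
  exact total ▸ setIntegral_le_integral integrable_exp_neg_sq_div_two
    (.of_forall fun _ => (exp_pos _).le)

lemma setIntegral_Iic_neg_exp_neg_sq_div_two_le {u : ℝ} (hu : 0 < u) :
    ∫ z in Iic (-u), exp (-z ^ 2 / 2) ≤ u⁻¹ * exp (-u ^ 2 / 2) :=
  calc ∫ z in Iic (-u), exp (-z ^ 2 / 2)
      ≤ ∫ z in Iic (-u), exp (u ^ 2 / 2) * exp (u * z) :=
        setIntegral_mono integrable_exp_neg_sq_div_two.integrableOn
          ((integrableOn_exp_mul_Iic hu _).const_mul _) fun z => by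
            rw [← exp_add]
            exact exp_le_exp.2 (by nlinarith [sq_nonneg (z + u)])
    _ = u⁻¹ * exp (-u ^ 2 / 2) := by
        rw [integral_const_mul, integral_exp_mul_Iic hu, mul_div, ← exp_add, div_eq_inv_mul]
        ring_nf

lemma setIntegral_Iic_exp_neg_sq_div_two_mul_exp (s t : ℝ) :
    ∫ z in Iic t, exp (-z ^ 2 / 2) * exp (s * z)
      = exp (s ^ 2 / 2) * ∫ w in Iic (t - s), exp (-w ^ 2 / 2) := by
  have shift := (measurePreserving_sub_right volume s).setIntegral_preimage_emb
    (MeasurableEquiv.subRight s).measurableEmbedding (fun w => exp (-w ^ 2 / 2)) (Iic (t - s))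
  rw [← shift, preimage_sub_const_Iic, sub_add_cancel, ← integral_const_mul]
  congr 1 with z
  rw [← exp_add, ← exp_add]
  ring_nf

lemma integral_ite_mul_exp_le_eq_setIntegral_Iic {x M s : ℝ} (hx : 0 < x) (hM : 0 < M)
    (hs : 0 < s) (f : ℝ → ℝ) :
    ∫ z, (if x * exp (s * z) ≤ M then f z else 0) = ∫ z in Iic (log (M / x) / s), f z := by
  rw [← integral_indicator measurableSet_Iic]
  congr 1 with z
  have : x * exp (s * z) ≤ M ↔ z ≤ log (M / x) / s := by
    rw [← le_div_iff₀' hx, ← le_log_iff_exp_le (div_pos hM hx), le_div_iff₀' hs]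
  simp only [this, indicator, mem_Iic]

lemma exp_sq_div_two_mul_setIntegral_Iic_le {m σ ℓ : ℝ} (hm : 0 < m) (hσ : 0 < σ)
    (hℓ : -(m * σ / 2) ≤ ℓ) :
    exp (m ^ 2 / 2) * ∫ w in Iic (-(m + ℓ / σ)), exp (-w ^ 2 / 2)
      ≤ 2 / m * exp (-(m / σ * ℓ)) := by
  set u := m + ℓ / σ
  have hu : m / 2 ≤ u := by
    have : -(m / 2) ≤ ℓ / σ := by rwa [le_div_iff₀ hσ, neg_mul, div_mul_eq_mul_div]
    linarith
  calc exp (m ^ 2 / 2) * ∫ w in Iic (-u), exp (-w ^ 2 / 2)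
      ≤ exp (m ^ 2 / 2) * (u⁻¹ * exp (-u ^ 2 / 2)) := by
        gcongr
        exact setIntegral_Iic_neg_exp_neg_sq_div_two_le (by linarith)
    _ = u⁻¹ * exp (-(m / σ * ℓ) - (ℓ / σ) ^ 2 / 2) := by
        rw [mul_left_comm, ← exp_add]
        congr 2
        simp only [u]
        ring
    _ ≤ 2 / m * exp (-(m / σ * ℓ)) := by
        gcongr
        · rw [← inv_div]
          exact inv_anti₀ (by positivity) hu
        · nlinarith [sq_nonneg (ℓ / σ)]

section Integrand

variable {β γ ε N x : ℝ}

lemma truncated_integrand_eq (hβ : 0 < β) (hε : 0 < ε) (hN : 0 < N) (hx : 0 < x) :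
    √N * exp (N * γ ^ 2 / (2 * β ^ 2)) / exp (γ * N) * (x * exp (-x) * ((√(2 * π))⁻¹ *
      ∫ z, if x * exp (β * √N * z) ≤ ε * exp (γ * N) then
        exp (-z ^ 2 / 2) * exp (β * √N * z) else 0))
    = (√(2 * π))⁻¹ * √N * x * exp (-x) * (exp (((β - γ / β) * √N) ^ 2 / 2) *
        ∫ w in Iic (-((β - γ / β) * √N + log (x / ε) / (β * √N))), exp (-w ^ 2 / 2)) := by
  have hr2 : √N ^ 2 = N := sq_sqrt hN.le
  have threshold : log (ε * exp (γ * N) / x) / (β * √N) - β * √N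
      = -((β - γ / β) * √N + log (x / ε) / (β * √N)) := by
    rw [log_div (by positivity) hx.ne', log_mul hε.ne' (exp_pos _).ne', log_exp,
      log_div hx.ne' hε.ne']
    field_simp
    rw [hr2]
    ring
  have prefactor : exp (N * γ ^ 2 / (2 * β ^ 2)) / exp (γ * N) * exp ((β * √N) ^ 2 / 2)
      = exp (((β - γ / β) * √N) ^ 2 / 2) := by
    rw [← exp_sub, ← exp_add, mul_pow, mul_pow, hr2]
    congr 1
    field_simp
    ring
  rw [integral_ite_mul_exp_le_eq_setIntegral_Iic hx (by positivity) (by positivity),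
    setIntegral_Iic_exp_neg_sq_div_two_mul_exp, threshold, ← prefactor]
  ring

lemma truncated_integrand_le (hβ : 0 < β) (hκ : 0 < β - γ / β) (hε : 0 < ε) (hN : 0 < N)
    (hx : 0 < x) :
    √N * exp (N * γ ^ 2 / (2 * β ^ 2)) / exp (γ * N) * (x * exp (-x) * ((√(2 * π))⁻¹ *
      ∫ z, if x * exp (β * √N * z) ≤ ε * exp (γ * N) then
        exp (-z ^ 2 / 2) * exp (β * √N * z) else 0))
    ≤ (β - γ / β)⁻¹ * ε ^ (1 - γ / β ^ 2) * (x ^ (γ / β ^ 2) * exp (-x))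
      + ε * √N * exp (-(γ * (β - γ / β) / (2 * β) * N)) * exp (-x) := by
  have hr2 : √N ^ 2 = N := sq_sqrt hN.le
  have h2π : 2 ≤ √(2 * π) := le_sqrt_of_sq_le (by nlinarith [pi_gt_three])
  rw [truncated_integrand_eq hβ hε hN hx]
  set m := (β - γ / β) * √N with hm_def
  set σ := β * √N with hσ_def
  set ℓ := log (x / ε) with hℓ_def
  have hm : 0 < m := by positivity
  have hσ : 0 < σ := by positivity
  by_cases hℓ : -(m * σ / 2) ≤ ℓ
  · refine le_add_of_le_of_nonneg ?_ (by positivity)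
    have hratio : m / σ = 1 - γ / β ^ 2 := by
      rw [hm_def, hσ_def]
      field_simp
    have hexp : x * exp (-(m / σ * ℓ)) = ε ^ (1 - γ / β ^ 2) * x ^ (γ / β ^ 2) := by
      rw [rpow_def_of_pos hε, rpow_def_of_pos hx, ← exp_add, hratio, hℓ_def,
        log_div hx.ne' hε.ne']
      nth_rw 1 [← exp_log hx]
      rw [← exp_add]
      congr 1
      field_simp
      ring
    calc (√(2 * π))⁻¹ * √N * x * exp (-x) * (exp (m ^ 2 / 2) *
          ∫ w in Iic (-(m + ℓ / σ)), exp (-w ^ 2 / 2))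
        ≤ (√(2 * π))⁻¹ * √N * x * exp (-x) * (2 / m * exp (-(m / σ * ℓ))) :=
          mul_le_mul_of_nonneg_left (exp_sq_div_two_mul_setIntegral_Iic_le hm hσ hℓ)
            (by positivity)
      _ = 2 / √(2 * π) * (β - γ / β)⁻¹ * (x * exp (-(m / σ * ℓ))) * exp (-x) := by
          rw [hm_def]
          field_simp
      _ = 2 / √(2 * π) *
            ((β - γ / β)⁻¹ * ε ^ (1 - γ / β ^ 2) * (x ^ (γ / β ^ 2) * exp (-x))) := by
          rw [hexp]
          ring
      _ ≤ (β - γ / β)⁻¹ * ε ^ (1 - γ / β ^ 2) * (x ^ (γ / β ^ 2) * exp (-x)) :=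
          mul_le_of_le_one_left (by positivity) ((div_le_one (by positivity)).2 h2π)
  · refine le_add_of_nonneg_of_le (by positivity) ?_
    have hxε : x ≤ ε * exp (-(m * σ / 2)) := by
      rw [← div_le_iff₀' hε, ← log_le_iff_le_exp (by positivity)]
      exact (not_le.1 hℓ).le
    calc (√(2 * π))⁻¹ * √N * x * exp (-x) * (exp (m ^ 2 / 2) *
          ∫ w in Iic (-(m + ℓ / σ)), exp (-w ^ 2 / 2))
        ≤ (√(2 * π))⁻¹ * √N * (ε * exp (-(m * σ / 2))) * exp (-x) *
            (exp (m ^ 2 / 2) * √(2 * π)) := by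
          gcongr
          exact setIntegral_exp_neg_sq_div_two_le _
      _ = ε * √N * exp (m ^ 2 / 2 - m * σ / 2) * exp (-x) := by
          rw [sub_eq_add_neg, exp_add]
          field_simp
      _ = ε * √N * exp (-(γ * (β - γ / β) / (2 * β) * N)) * exp (-x) := by
          congr 3
          rw [hm_def, hσ_def]
          field_simp
          rw [hr2]
          ring

end Integrand

lemma limsup_le_of_eventually_le_add_of_tendsto_zero {ι : Type*} {l : Filter ι} [l.NeBot]
    {f D : ι → ℝ} {C : ℝ} (hf : IsBoundedUnder (· ≥ ·) l f) (hle : ∀ᶠ n in l, f n ≤ C + D n)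
    (hD : Tendsto D l (nhds 0)) : limsup f l ≤ C := by
  have hC : Tendsto (fun n => C + D n) l (nhds C) := by simpa using tendsto_const_nhds.add hD
  calc limsup f l ≤ limsup (fun n => C + D n) l :=
        limsup_le_limsup hle hf.isCoboundedUnder_le hC.isBoundedUnder_le
    _ = C := hC.limsup_eq

lemma tendsto_sqrt_mul_exp_neg_mul_atTop_nhds_zero {b : ℝ} (hb : 0 < b) :
    Tendsto (fun x : ℝ => √x * exp (-(b * x))) atTop (nhds 0) :=
  (tendsto_rpow_mul_exp_neg_mul_atTop_nhds_zero (1 / 2) b hb).congr fun x => by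
    rw [sqrt_eq_rpow, neg_mul]

/-- Truncated-mean estimate (Condition (A3-1)) for the p-spin model: with
`c_n = e^{γn}`, `a_n = √n e^{nγ²/(2β²)}` and `α = γ/β²`, for every `ε ∈ (0,1]`,
`limsup_n (a_n/c_n) ∫_0^∞ x e^{-x} E[e^{β√n Z} 1{x e^{β√n Z} ≤ ε c_n}] dx
  ≤ (β - γ/β)⁻¹ ε^{1-α} ∫_0^∞ x^α e^{-x} dx`. -/
theorem truncated_mean_estimate (β γ : ℝ) (hβ : 0 < β) (hγ : 0 < γ) (hγβ : γ < β ^ 2)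
    (c a : ℕ → ℝ) (hc : ∀ n, c n = Real.exp (γ * n))
    (ha : ∀ n, a n = Real.sqrt n * Real.exp (n * γ ^ 2 / (2 * β ^ 2)))
    (α : ℝ) (hα : α = γ / β ^ 2) (ε : ℝ) (hε : ε ∈ Set.Ioc (0:ℝ) 1) :
    Filter.limsup (fun n : ℕ =>
        (a n / c n) * ∫ x in Ioi (0:ℝ), x * Real.exp (-x) *
          ((Real.sqrt (2 * π))⁻¹ * ∫ z : ℝ,
            (if x * Real.exp (β * Real.sqrt n * z) ≤ ε * c n then
              Real.exp (-z ^ 2 / 2) * Real.exp (β * Real.sqrt n * z) else 0))) atTop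
      ≤ (β - γ / β)⁻¹ * ε ^ ((1:ℝ) - α) * ∫ x in Ioi (0:ℝ), x ^ α * Real.exp (-x) := by
  obtain rfl : c = fun n : ℕ => exp (γ * n) := funext hc
  obtain rfl : a = fun n : ℕ => √n * exp (n * γ ^ 2 / (2 * β ^ 2)) := funext ha
  subst hα
  have hβ2 : 0 < β ^ 2 := by positivity
  have hκ : 0 < β - γ / β := by
    rw [sub_pos, div_lt_iff₀ hβ, ← sq]
    exact hγβ
  have power_integrable : IntegrableOn (fun x : ℝ => x ^ (γ / β ^ 2) * exp (-x)) (Ioi 0) := by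
    simpa only [rpow_one] using
      integrableOn_rpow_mul_exp_neg_rpow (s := γ / β ^ 2) (by linarith [div_pos hγ hβ2]) one_pos
  have exp_integrable : IntegrableOn (fun x : ℝ => exp (-x)) (Ioi 0) := by
    simpa using exp_neg_integrableOn_Ioi 0 one_pos
  refine limsup_le_of_eventually_le_add_of_tendsto_zero
    (D := fun n : ℕ => ε * √n * exp (-(γ * (β - γ / β) / (2 * β) * n)))
    ⟨0, eventually_map.2 (.of_forall fun n => ?_)⟩ ?_ ?_
  · exact mul_nonneg (by positivity)
      (setIntegral_nonneg measurableSet_Ioi fun x (hx : 0 < x) => by positivity)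
  · filter_upwards [eventually_gt_atTop 0] with n hn
    rw [← integral_const_mul]
    calc _ ≤ ∫ x in Ioi 0, ((β - γ / β)⁻¹ * ε ^ (1 - γ / β ^ 2) * (x ^ (γ / β ^ 2) * exp (-x))
          + ε * √n * exp (-(γ * (β - γ / β) / (2 * β) * n)) * exp (-x)) :=
          integral_mono_of_nonneg
            (ae_restrict_of_forall_mem measurableSet_Ioi fun x (hx : 0 < x) => by positivity)
            ((power_integrable.const_mul _).add (exp_integrable.const_mul _))
            (ae_restrict_of_forall_mem measurableSet_Ioi fun x hx =>
              truncated_integrand_le hβ hκ hε.1 (Nat.cast_pos.2 hn) hx)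
      _ = _ := by
        rw [integral_add (power_integrable.const_mul _) (exp_integrable.const_mul _),
          integral_const_mul, integral_const_mul, integral_exp_neg_Ioi_zero, mul_one]
  · simpa only [mul_zero, mul_assoc, Function.comp_apply] using
      ((tendsto_sqrt_mul_exp_neg_mul_atTop_nhds_zero (b := γ * (β - γ / β) / (2 * β))
        (by positivity)).comp
      tendsto_natCast_atTop_atTop).const_mul ε
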